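/- arXiv:0708.0331 — 6 statements merged into one kernel-verified Lean document; each statement's English description precedes it below -/
import Mathlib

section
/- Let 𝕂 be ℝ or ℂ, let m ≥ 1 be an integer, let F be an m-dimensional normed space over 𝕂, and let d ≥ 1 be a real number. Suppose there exists a linear isomorphism T : ℓ₂^m → F with ‖T‖ ≤ d and ‖T⁻¹‖ = 1. Then there exist vectors x₁, …, x_m in F and continuous linear functionals φ₁, …, φ_m in F′ with ‖φ_i‖ = 1 for every i, such that: (i) for each i, φ_i(x_i) is a real number satisfying 1 ≤ φ_i(x_i) ≤ d; (ii) φ_j(x_k) = 0 whenever j ≠ k; (iii) 1 ≤ min_{1≤k≤m} ‖x_k‖ ≤ max_{1≤k≤m} ‖x_k‖ = ‖x₁‖ ≤ d; and (iv) for every real number r ≥ 2, sup{ (Σ_{k=1}^m |φ(x_k)|^r)^{1/r} : φ ∈ F′, ‖φ‖ ≤ 1 } = ‖x₁‖. -/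
/-!
Take a unit vector `u` at which `‖T‖` is attained, an orthonormal basis `(b k)` of `ℓ₂^m` with
`b 0 = u`, and `x k = T (b k)`. The functionals `⟪b k, T⁻¹ ·⟫` are biorthogonal to `(x k)` and
have norm at most `‖T⁻¹‖ = 1`; normalizing them gives the `φ k`, with
`φ k (x k) = 1 / ‖⟪b k, T⁻¹ ·⟫‖` squeezed between `1` and `‖x k‖ ≤ ‖T‖`. For `‖φ‖ ≤ 1`,
Parseval gives `∑ ‖φ (x k)‖² = ‖φ ∘ T‖² ≤ ‖T‖² = ‖x 0‖²`, so every `ℓ^r` sum with `r ≥ 2` is at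
most `‖x 0‖`, and a norming functional of `x 0` attains this bound.
-/

open Module

namespace Real

variable {ι : Type*} [Fintype ι] {f : ι → ℝ} {r : ℝ}

lemma le_sum_rpow_one_div (hf : ∀ i, 0 ≤ f i) (hr : 0 < r) (i : ι) :
    f i ≤ (∑ j, f j ^ r) ^ (1 / r) := by
  rw [one_div, le_rpow_inv_iff_of_pos (hf i) (Finset.sum_nonneg fun j _ => rpow_nonneg (hf j) r) hr]
  exact Finset.single_le_sum (f := fun j => f j ^ r) (fun j _ => rpow_nonneg (hf j) r)
    (Finset.mem_univ i)

lemma sum_rpow_one_div_le_of_sum_sq_le (hf : ∀ i, 0 ≤ f i) (hr : 2 ≤ r) {M : ℝ}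
    (hM : 0 ≤ M) (hsq : ∑ i, f i ^ 2 ≤ M ^ 2) : (∑ i, f i ^ r) ^ (1 / r) ≤ M := by
  have hr0 : 0 < r := two_pos.trans_le hr
  have hfM : ∀ i, f i ≤ M := fun i => by
    refine (pow_le_pow_iff_left₀ (hf i) hM two_ne_zero).1 (le_trans ?_ hsq)
    exact Finset.single_le_sum (f := fun j => f j ^ 2) (fun j _ => sq_nonneg _) (Finset.mem_univ i)
  -- `a ^ r ≤ M ^ (r - 2) * a ^ 2` for `0 ≤ a ≤ M`, summed against `∑ a ^ 2 ≤ M ^ 2`.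
  have hsplit : ∀ a : ℝ, 0 ≤ a → a ^ r = a ^ (r - 2) * a ^ 2 := fun a ha => by
    rw [← rpow_two, ← rpow_add' ha (ne_of_gt (by linarith)), sub_add_cancel]
  rw [one_div, rpow_inv_le_iff_of_pos (Finset.sum_nonneg fun i _ => rpow_nonneg (hf i) r) hM hr0]
  calc ∑ i, f i ^ r ≤ ∑ i, M ^ (r - 2) * f i ^ 2 := Finset.sum_le_sum fun i _ => by
        rw [hsplit _ (hf i)]
        exact mul_le_mul_of_nonneg_right (rpow_le_rpow (hf i) (hfM i) (by linarith)) (sq_nonneg _)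
    _ = M ^ (r - 2) * ∑ i, f i ^ 2 := (Finset.mul_sum _ _ _).symm
    _ ≤ M ^ (r - 2) * M ^ 2 := by gcongr
    _ = M ^ r := (hsplit M hM).symm

end Real

namespace ContinuousLinearMap

variable {𝕜 E F : Type*} [RCLike 𝕜] [NormedAddCommGroup E] [NormedSpace 𝕜 E]
  [NormedAddCommGroup F] [NormedSpace 𝕜 F]

lemma exists_norm_eq_one_norm_apply_eq_opNorm [FiniteDimensional 𝕜 E] [Nontrivial E]
    (f : E →L[𝕜] F) : ∃ u : E, ‖u‖ = 1 ∧ ‖f u‖ = ‖f‖ := by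
  have := FiniteDimensional.proper_rclike 𝕜 E
  obtain ⟨u, hu, hmax⟩ := (isCompact_sphere (0 : E) 1).exists_isMaxOn
    (Set.nonempty_coe_sort.1 (NormedSpace.sphere_nonempty_rclike 𝕜 zero_le_one))
    (continuous_norm.comp f.continuous).continuousOn
  have hu1 : ‖u‖ = 1 := mem_sphere_zero_iff_norm.1 hu
  refine ⟨u, hu1, le_antisymm (by simpa [hu1] using f.le_opNorm u) ?_⟩
  exact opNorm_le_of_unit_norm (norm_nonneg _) fun v hv => hmax (mem_sphere_zero_iff_norm.2 hv)

lemma exists_norm_ofReal_smul_eq_one {ψ : E →L[𝕜] 𝕜} {x : E} (hψx : ψ x = 1) (hψ : ‖ψ‖ ≤ 1) :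
    ∃ c : ℝ, 1 ≤ c ∧ c ≤ ‖x‖ ∧ ‖(c : 𝕜) • ψ‖ = 1 := by
  have hψx' : 1 ≤ ‖ψ‖ * ‖x‖ := by simpa [hψx] using ψ.le_opNorm x
  have hψpos : 0 < ‖ψ‖ := pos_of_mul_pos_left (one_pos.trans_le hψx') (norm_nonneg x)
  refine ⟨‖ψ‖⁻¹, one_le_inv_iff₀.2 ⟨hψpos, hψ⟩, ?_, ?_⟩
  · rwa [inv_le_iff_one_le_mul₀' hψpos]
  · rw [norm_smul, RCLike.norm_ofReal, abs_of_pos (inv_pos.2 hψpos), inv_mul_cancel₀ hψpos.ne']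

end ContinuousLinearMap

lemma OrthonormalBasis.sum_sq_norm_apply_eq_norm_sq {ι 𝕜 E : Type*} [Fintype ι] [RCLike 𝕜]
    [NormedAddCommGroup E] [InnerProductSpace 𝕜 E] (b : OrthonormalBasis ι 𝕜 E)
    (L : E →L[𝕜] 𝕜) : ∑ i, ‖L (b i)‖ ^ 2 = ‖L‖ ^ 2 := by
  have := b.toBasis.finiteDimensional_of_finite
  have := FiniteDimensional.complete 𝕜 E
  simp_rw [← (InnerProductSpace.toDual 𝕜 E).symm.norm_map, ← b.sum_sq_norm_inner_left,
    InnerProductSpace.toDual_symm_apply]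

lemma OrthonormalBasis.exists_apply_eq {ι 𝕜 E : Type*} [Fintype ι] [RCLike 𝕜]
    [NormedAddCommGroup E] [InnerProductSpace 𝕜 E] [FiniteDimensional 𝕜 E]
    (hcard : finrank 𝕜 E = Fintype.card ι) (i₀ : ι) {u : E} (hu : ‖u‖ = 1) :
    ∃ b : OrthonormalBasis ι 𝕜 E, b i₀ = u := by
  have horth : Orthonormal 𝕜 (({i₀} : Set ι).domRestrict fun _ => u) :=
    ⟨fun _ => hu, fun i j hij => absurd (Subtype.ext (i.2.trans j.2.symm)) hij⟩
  obtain ⟨b, hb⟩ := horth.exists_orthonormalBasis_extension_of_card_eq hcard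
  exact ⟨b, hb i₀ rfl⟩

lemma sSup_sum_rpow_norm_apply_eq {𝕜 F ι : Type*} [RCLike 𝕜] [NormedAddCommGroup F]
    [NormedSpace 𝕜 F] [Fintype ι] {x : ι → F} {i₀ : ι}
    (hx : ∀ φ : F →L[𝕜] 𝕜, ‖φ‖ ≤ 1 → ∑ k, ‖φ (x k)‖ ^ 2 ≤ ‖x i₀‖ ^ 2) {r : ℝ} (hr : 2 ≤ r) :
    sSup {s : ℝ | ∃ φ : F →L[𝕜] 𝕜, ‖φ‖ ≤ 1 ∧ s = (∑ k, ‖φ (x k)‖ ^ r) ^ (1 / r)} = ‖x i₀‖ := by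
  have hub : ∀ φ : F →L[𝕜] 𝕜, ‖φ‖ ≤ 1 → (∑ k, ‖φ (x k)‖ ^ r) ^ (1 / r) ≤ ‖x i₀‖ := fun φ hφ =>
    Real.sum_rpow_one_div_le_of_sum_sq_le (fun _ => norm_nonneg _) hr (norm_nonneg _) (hx φ hφ)
  obtain ⟨g, hg, hgx⟩ := exists_dual_vector'' 𝕜 (x i₀)
  have hlb : ‖x i₀‖ ≤ (∑ k, ‖g (x k)‖ ^ r) ^ (1 / r) := by
    simpa [hgx] using Real.le_sum_rpow_one_div (fun k => norm_nonneg (g (x k))) (by linarith) i₀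
  refine IsGreatest.csSup_eq ⟨⟨g, hg, ((hub g hg).antisymm hlb).symm⟩, ?_⟩
  rintro s ⟨φ, hφ, rfl⟩
  exact hub φ hφ

theorem stmt_0_general {𝕂 : Type*} [RCLike 𝕂] {F : Type*} [NormedAddCommGroup F]
    [NormedSpace 𝕂 F] {m : ℕ} (hm : 0 < m)
    {d : ℝ} (T : EuclideanSpace 𝕂 (Fin m) ≃L[𝕂] F)
    (hT : ‖(T : EuclideanSpace 𝕂 (Fin m) →L[𝕂] F)‖ ≤ d)
    (hTinv : ‖(T.symm : F →L[𝕂] EuclideanSpace 𝕂 (Fin m))‖ = 1) :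
    ∃ (x : Fin m → F) (φ : Fin m → (F →L[𝕂] 𝕂)),
      (∀ i, ‖φ i‖ = 1) ∧
      (∀ i, ∃ c : ℝ, 1 ≤ c ∧ c ≤ d ∧ φ i (x i) = (c : 𝕂)) ∧
      (∀ j k, j ≠ k → φ j (x k) = 0) ∧
      (∀ k, 1 ≤ ‖x k‖) ∧ (∀ k, ‖x k‖ ≤ ‖x ⟨0, hm⟩‖) ∧ ‖x ⟨0, hm⟩‖ ≤ d ∧
      (∀ r : ℝ, 2 ≤ r →
        sSup {s : ℝ | ∃ φ' : F →L[𝕂] 𝕂, ‖φ'‖ ≤ 1 ∧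
          s = (∑ k, ‖φ' (x k)‖ ^ r) ^ (1 / r)} = ‖x ⟨0, hm⟩‖) := by
  set i₀ : Fin m := ⟨0, hm⟩
  have : Nonempty (Fin m) := ⟨i₀⟩
  set A : EuclideanSpace 𝕂 (Fin m) →L[𝕂] F := ↑T
  set S : F →L[𝕂] EuclideanSpace 𝕂 (Fin m) := ↑T.symm
  obtain ⟨u, hu, hAu⟩ := A.exists_norm_eq_one_norm_apply_eq_opNorm
  obtain ⟨b, hbu⟩ :=
    OrthonormalBasis.exists_apply_eq (finrank_euclideanSpace (𝕜 := 𝕂) (ι := Fin m)) i₀ hu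
  set x : Fin m → F := fun k => A (b k)
  have hbiorth : ∀ j k, (innerSL 𝕂 (b j)).comp S (x k) = if j = k then 1 else 0 := fun j k => by
    simp [x, A, S, orthonormal_iff_ite.1 b.orthonormal]
  have hψ : ∀ k, ‖(innerSL 𝕂 (b k)).comp S‖ ≤ 1 := fun k =>
    (ContinuousLinearMap.opNorm_comp_le _ _).trans (by simp [hTinv, b.orthonormal.1 k])
  choose c hc1 hcx hcnorm using fun k =>
    ContinuousLinearMap.exists_norm_ofReal_smul_eq_one (by simpa using hbiorth k k) (hψ k)
  have hx_i₀ : ‖x i₀‖ = ‖A‖ := by simp [x, hbu, hAu]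
  have hx_le : ∀ k, ‖x k‖ ≤ ‖x i₀‖ := fun k => by
    simpa [hx_i₀, b.orthonormal.1 k] using A.le_opNorm (b k)
  have hbessel : ∀ φ : F →L[𝕂] 𝕂, ‖φ‖ ≤ 1 → ∑ k, ‖φ (x k)‖ ^ 2 ≤ ‖x i₀‖ ^ 2 := fun φ hφ => by
    have hφA : ‖φ.comp A‖ ≤ ‖A‖ :=
      (φ.opNorm_comp_le A).trans (mul_le_of_le_one_left (norm_nonneg A) hφ)
    calc ∑ k, ‖φ (x k)‖ ^ 2 = ‖φ.comp A‖ ^ 2 := b.sum_sq_norm_apply_eq_norm_sq (φ.comp A)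
      _ ≤ ‖A‖ ^ 2 := pow_le_pow_left₀ (norm_nonneg (φ.comp A)) hφA 2
      _ = ‖x i₀‖ ^ 2 := by rw [hx_i₀]
  refine ⟨x, fun k => (c k : 𝕂) • (innerSL 𝕂 (b k)).comp S, hcnorm,
    fun i => ⟨c i, hc1 i, (hcx i).trans ((hx_le i).trans (hx_i₀.trans_le hT)), by
      rw [smul_apply, hbiorth, if_pos rfl, smul_eq_mul, mul_one]⟩,
    fun j k hjk => by rw [smul_apply, hbiorth, if_neg hjk, smul_zero],
    fun k => (hc1 k).trans (hcx k), hx_le, hx_i₀.trans_le hT,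
    fun r hr => sSup_sum_rpow_norm_apply_eq hbessel hr⟩

/-- Lemma 1 of the paper. If `F` is an `m`-dimensional normed space
over `𝕂 = ℝ` or `ℂ` and there is a linear isomorphism `T : ℓ₂^m → F` with
`‖T‖ ≤ d` and `‖T⁻¹‖ = 1` (`d ≥ 1`), then there exist `x₁, …, x_m` in `F` and
norm-one functionals `φ₁, …, φ_m` in `F′` such that `1 ≤ φ_i(x_i) ≤ d` (real values),
`φ_j(x_k) = 0` for `j ≠ k`, `1 ≤ min ‖x_k‖ ≤ max ‖x_k‖ = ‖x₁‖ ≤ d`, and for every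
real `r ≥ 2`, `sup { (Σ_k |φ(x_k)|^r)^(1/r) : φ ∈ B_{F′} } = ‖x₁‖`. -/
theorem stmt_0 {𝕂 : Type*} [RCLike 𝕂] {F : Type*} [NormedAddCommGroup F]
    [NormedSpace 𝕂 F] {m : ℕ} (hm : 0 < m) (hdim : Module.finrank 𝕂 F = m)
    {d : ℝ} (hd : 1 ≤ d) (T : EuclideanSpace 𝕂 (Fin m) ≃L[𝕂] F)
    (hT : ‖(T : EuclideanSpace 𝕂 (Fin m) →L[𝕂] F)‖ ≤ d)
    (hTinv : ‖(T.symm : F →L[𝕂] EuclideanSpace 𝕂 (Fin m))‖ = 1) :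
    ∃ (x : Fin m → F) (φ : Fin m → (F →L[𝕂] 𝕂)),
      (∀ i, ‖φ i‖ = 1) ∧
      (∀ i, ∃ c : ℝ, 1 ≤ c ∧ c ≤ d ∧ φ i (x i) = (c : 𝕂)) ∧
      (∀ j k, j ≠ k → φ j (x k) = 0) ∧
      (∀ k, 1 ≤ ‖x k‖) ∧ (∀ k, ‖x k‖ ≤ ‖x ⟨0, hm⟩‖) ∧ ‖x ⟨0, hm⟩‖ ≤ d ∧
      (∀ r : ℝ, 2 ≤ r →
        sSup {s : ℝ | ∃ φ' : F →L[𝕂] 𝕂, ‖φ'‖ ≤ 1 ∧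
          s = (∑ k, ‖φ' (x k)‖ ^ r) ^ (1 / r)} = ‖x ⟨0, hm⟩‖) :=
  stmt_0_general hm T hT hTinv
end

section
/- Let 𝕂 be ℝ or ℂ, let m ≥ 1 be an integer, let F be an m-dimensional normed space over 𝕂, and let d ≥ 1 be a real number. Suppose there exists a linear isomorphism T : ℓ₂^m → F with ‖T‖ ≤ d and ‖T⁻¹‖ = 1. Then there exist functionals φ₁, …, φ_m in F′ with ‖φ_j‖ = 1 for every j, such that the vectors T*(φ₁), …, T*(φ_m) in ℓ₂^m are pairwise orthogonal with respect to the standard inner product of ℓ₂^m and satisfy 1 ≤ ‖T*(φ_j)‖₂ ≤ d for every j, where T* : F′ → (ℓ₂^m)′ ≅ ℓ₂^m denotes the adjoint of T. -/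
/-! Pull the standard orthonormal basis `e_j` back through `T⁻¹`: the functional
`ψ_j = ⟪e_j, T⁻¹ ·⟫` has adjoint image `e_j`, and `ψ_j (T e_j) = 1` squeezes its norm between
`‖T‖⁻¹` and `‖T⁻¹‖`. Rescaling `e_j` by `r_j = ‖ψ_j‖⁻¹` makes the functionals unit vectors,
keeps the adjoint images orthogonal, and gives `‖T⁻¹‖⁻¹ ≤ ‖r_j e_j‖ ≤ ‖T‖`. -/

namespace ContinuousLinearEquiv

variable {𝕂 : Type*} [RCLike 𝕂] {E : Type*} [NormedAddCommGroup E] [InnerProductSpace 𝕂 E]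
  {F : Type*} [NormedAddCommGroup F] [NormedSpace 𝕂 F] (T : E ≃L[𝕂] F)

/-- The functional `φ` on `F` whose adjoint image `T* φ` is (the Riesz representative) `v`. -/
noncomputable def adjointPreimage (v : E) : F →L[𝕂] 𝕂 :=
  (innerSL 𝕂 v).comp (T.symm : F →L[𝕂] E)

@[simp]
theorem adjointPreimage_apply_apply (v w : E) : T.adjointPreimage v (T w) = inner 𝕂 v w := by
  simp [adjointPreimage]

theorem adjointPreimage_ofReal_smul (r : ℝ) (v : E) :
    T.adjointPreimage ((r : 𝕂) • v) = (r : 𝕂) • T.adjointPreimage v := by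
  ext x
  simp [adjointPreimage, RCLike.real_smul_eq_coe_mul]

theorem norm_adjointPreimage_le (v : E) :
    ‖T.adjointPreimage v‖ ≤ ‖v‖ * ‖(T.symm : F →L[𝕂] E)‖ := by
  simpa only [adjointPreimage, innerSL_apply_norm] using
    ContinuousLinearMap.opNorm_comp_le (innerSL 𝕂 v) (T.symm : F →L[𝕂] E)

theorem one_le_norm_adjointPreimage_mul {u : E} (hu : ‖u‖ = 1) :
    1 ≤ ‖T.adjointPreimage u‖ * ‖(T : E →L[𝕂] F)‖ := by
  have hTu : T.adjointPreimage u (T u) = 1 := by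
    rw [adjointPreimage_apply_apply, inner_self_eq_norm_sq_to_K, hu]
    norm_num
  calc (1 : ℝ) = ‖T.adjointPreimage u (T u)‖ := by rw [hTu, norm_one]
    _ ≤ ‖T.adjointPreimage u‖ * ‖T u‖ := (T.adjointPreimage u).le_opNorm _
    _ ≤ ‖T.adjointPreimage u‖ * ‖(T : E →L[𝕂] F)‖ := by
      gcongr
      simpa [hu] using (T : E →L[𝕂] F).le_opNorm u

theorem exists_norm_adjointPreimage_ofReal_smul_eq_one {u : E} (hu : ‖u‖ = 1) :
    ∃ r : ℝ, ‖T.adjointPreimage ((r : 𝕂) • u)‖ = 1 ∧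
      ‖(T.symm : F →L[𝕂] E)‖⁻¹ ≤ r ∧ r ≤ ‖(T : E →L[𝕂] F)‖ := by
  set c := ‖T.adjointPreimage u‖
  have hlow : 1 ≤ c * ‖(T : E →L[𝕂] F)‖ := T.one_le_norm_adjointPreimage_mul hu
  have hc : 0 < c :=
    pos_of_mul_pos_left (one_pos.trans_le hlow) (norm_nonneg _)
  have hup : c ≤ ‖(T.symm : F →L[𝕂] E)‖ := by
    simpa only [hu, one_mul] using T.norm_adjointPreimage_le u
  refine ⟨c⁻¹, ?_, inv_anti₀ hc hup, ?_⟩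
  · rw [adjointPreimage_ofReal_smul, norm_smul, RCLike.norm_ofReal, abs_inv, abs_of_pos hc,
      inv_mul_cancel₀ hc.ne']
  · rwa [inv_le_iff_one_le_mul₀ hc, mul_comm]

end ContinuousLinearEquiv

theorem stmt_1_general {𝕂 : Type*} [RCLike 𝕂] {F : Type*} [NormedAddCommGroup F]
    [NormedSpace 𝕂 F] {m : ℕ}
    {d : ℝ} (T : EuclideanSpace 𝕂 (Fin m) ≃L[𝕂] F)
    (hT : ‖(T : EuclideanSpace 𝕂 (Fin m) →L[𝕂] F)‖ ≤ d)
    (hTinv : ‖(T.symm : F →L[𝕂] EuclideanSpace 𝕂 (Fin m))‖ = 1) :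
    ∃ (φ : Fin m → (F →L[𝕂] 𝕂)) (v : Fin m → EuclideanSpace 𝕂 (Fin m)),
      (∀ j, ‖φ j‖ = 1) ∧
      (∀ j w, φ j (T w) = inner 𝕂 (v j) w) ∧
      (∀ j k, j ≠ k → (inner 𝕂 (v j) (v k) : 𝕂) = 0) ∧
      (∀ j, 1 ≤ ‖v j‖ ∧ ‖v j‖ ≤ d) := by
  set e := EuclideanSpace.basisFun (Fin m) 𝕂
  choose r hφ hr_low hr_up using fun j =>
    T.exists_norm_adjointPreimage_ofReal_smul_eq_one (e.orthonormal.1 j)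
  rw [hTinv, inv_one] at hr_low
  have hv_norm : ∀ j, ‖(r j : 𝕂) • e j‖ = r j := fun j => by
    rw [norm_smul, e.orthonormal.1 j, mul_one, RCLike.norm_ofReal,
      abs_of_pos (one_pos.trans_le (hr_low j))]
  refine ⟨fun j => T.adjointPreimage ((r j : 𝕂) • e j), fun j => (r j : 𝕂) • e j,
    hφ, fun j w => T.adjointPreimage_apply_apply _ w, fun j k hjk => ?_,
    fun j => ⟨(hv_norm j).symm ▸ hr_low j, (hv_norm j).symm ▸ (hr_up j).trans hT⟩⟩
  rw [inner_smul_left, inner_smul_right, e.orthonormal.2 hjk, mul_zero, mul_zero]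

/-- First step of the proof of Lemma 1. Under the same hypotheses as
Lemma 1, there exist norm-one functionals `φ₁, …, φ_m` in `F′` whose images under
the adjoint `T* : F′ → (ℓ₂^m)′ ≅ ℓ₂^m` (the identification being via the standard
inner product: `T*(φ_j)` is the vector `v j` with `φ_j(T w) = ⟪v j, w⟫` for all `w`)
are pairwise orthogonal and satisfy `1 ≤ ‖T*(φ_j)‖₂ ≤ d` for every `j`. -/
theorem stmt_1 {𝕂 : Type*} [RCLike 𝕂] {F : Type*} [NormedAddCommGroup F]
    [NormedSpace 𝕂 F] {m : ℕ} (hm : 0 < m) (hdim : Module.finrank 𝕂 F = m)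
    {d : ℝ} (hd : 1 ≤ d) (T : EuclideanSpace 𝕂 (Fin m) ≃L[𝕂] F)
    (hT : ‖(T : EuclideanSpace 𝕂 (Fin m) →L[𝕂] F)‖ ≤ d)
    (hTinv : ‖(T.symm : F →L[𝕂] EuclideanSpace 𝕂 (Fin m))‖ = 1) :
    ∃ (φ : Fin m → (F →L[𝕂] 𝕂)) (v : Fin m → EuclideanSpace 𝕂 (Fin m)),
      (∀ j, ‖φ j‖ = 1) ∧
      (∀ j w, φ j (T w) = inner 𝕂 (v j) w) ∧
      (∀ j k, j ≠ k → (inner 𝕂 (v j) (v k) : 𝕂) = 0) ∧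
      (∀ j, 1 ≤ ‖v j‖ ∧ ‖v j‖ ≤ d) :=
  stmt_1_general T hT hTinv
end

section
/- Let 𝕂 be ℝ or ℂ, let m ≥ 1 be an integer, and let F be an m-dimensional normed space over 𝕂. Then there exist vectors x₁, …, x_m in F with 1 ≤ ‖x_k‖ ≤ ‖x₁‖ for every k, such that for every real number r ≥ 2, sup{ (Σ_{k=1}^m |φ(x_k)|^r)^{1/r} : φ ∈ F′, ‖φ‖ ≤ 1 } = ‖x₁‖. -/
/-!
Pull the Euclidean structure back to `F` through a linear isomorphism `T : ℓ²_m → F`, and take an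
orthonormal basis `v` of `ℓ²_m` whose first vector is a point where `‖T‖` is attained. For
`‖φ‖ ≤ 1`, Parseval gives `∑ₖ ‖φ (T vₖ)‖² = ‖φ ∘ T‖² ≤ ‖T‖² = ‖T v₁‖²`, so the weak `ℓ²` norm
of `(T vₖ)` is `‖T v₁‖`; this persists for every `r ≥ 2`, since then `ℓ^r ≤ ℓ²`, and a norming
functional of `T v₁` shows it is attained. Rescaling so that the shortest `T vₖ` has norm one
gives the `xₖ`.
-/

open Finset

theorem sum_rpow_le_rpow_of_sum_rpow_le {ι : Type*} {s : Finset ι} {t : ι → ℝ}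
    (ht : ∀ i ∈ s, 0 ≤ t i) {M p r : ℝ} (hM : 0 ≤ M) (hp : 0 < p) (hpr : p ≤ r)
    (h : ∑ i ∈ s, t i ^ p ≤ M ^ p) : ∑ i ∈ s, t i ^ r ≤ M ^ r := by
  have hle : ∀ i ∈ s, t i ≤ M := fun i hi =>
    (Real.rpow_le_rpow_iff (ht i hi) hM hp).1
      ((single_le_sum (fun j hj => Real.rpow_nonneg (ht j hj) p) hi).trans h)
  have hsplit : ∀ a : ℝ, 0 ≤ a → a ^ r = a ^ p * a ^ (r - p) := fun a ha => by
    rw [← Real.rpow_add_of_nonneg ha hp.le (sub_nonneg.2 hpr), add_sub_cancel]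
  calc ∑ i ∈ s, t i ^ r = ∑ i ∈ s, t i ^ p * t i ^ (r - p) :=
        sum_congr rfl fun i hi => hsplit _ (ht i hi)
    _ ≤ ∑ i ∈ s, t i ^ p * M ^ (r - p) := by
        gcongr with i hi
        · exact Real.rpow_nonneg (ht i hi) p
        · exact ht i hi
        · exact hle i hi
    _ = (∑ i ∈ s, t i ^ p) * M ^ (r - p) := (sum_mul ..).symm
    _ ≤ M ^ p * M ^ (r - p) := by gcongr
    _ = M ^ r := (hsplit M hM).symm

theorem ContinuousLinearMap.exists_norm_eq_one_norm_apply_eq_opNorm_s2 {𝕜 E F : Type*}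
    [RCLike 𝕜] [NormedAddCommGroup E] [NormedSpace 𝕜 E] [ProperSpace E] [Nontrivial E]
    [NormedAddCommGroup F] [NormedSpace 𝕜 F] (f : E →L[𝕜] F) :
    ∃ a : E, ‖a‖ = 1 ∧ ‖f a‖ = ‖f‖ := by
  have : NormedSpace ℝ E := NormedSpace.restrictScalars ℝ 𝕜 E
  obtain ⟨a, ha, hsup⟩ := (isCompact_sphere (0 : E) 1).exists_sSup_image_eq
    (NormedSpace.sphere_nonempty.mpr zero_le_one) (continuous_norm.comp f.continuous).continuousOn
  exact ⟨a, mem_sphere_zero_iff_norm.1 ha, hsup.symm.trans f.sSup_sphere_eq_norm⟩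

theorem OrthonormalBasis.sum_sq_norm_apply {𝕜 E ι : Type*} [RCLike 𝕜] [NormedAddCommGroup E]
    [InnerProductSpace 𝕜 E] [CompleteSpace E] [Fintype ι] (b : OrthonormalBasis ι 𝕜 E)
    (ψ : StrongDual 𝕜 E) : ∑ i, ‖ψ (b i)‖ ^ 2 = ‖ψ‖ ^ 2 := by
  simp_rw [← InnerProductSpace.toDual_symm_apply (y := ψ)]
  rw [b.sum_sq_norm_inner_left, LinearIsometryEquiv.norm_map]

section WeakNorm

variable {𝕜 F ι : Type*} [RCLike 𝕜] [NormedAddCommGroup F] [NormedSpace 𝕜 F] [Fintype ι]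

variable (𝕜) in
/-- The weak `ℓ^p` norm `sup_{‖φ‖ ≤ 1} (∑ₖ ‖φ (x k)‖ ^ p) ^ (1 / p)` of `x` is at most `M`. -/
def WeakLpNormLE (p : ℝ) (x : ι → F) (M : ℝ) : Prop :=
  ∀ φ : StrongDual 𝕜 F, ‖φ‖ ≤ 1 → ∑ k, ‖φ (x k)‖ ^ p ≤ M ^ p

variable (𝕜) in
theorem exists_norm_le_one_rpow_norm_le_sum (x : ι → F) (i : ι) (p : ℝ) :
    ∃ g : StrongDual 𝕜 F, ‖g‖ ≤ 1 ∧ ‖x i‖ ^ p ≤ ∑ k, ‖g (x k)‖ ^ p := by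
  obtain ⟨g, hg, hgx⟩ := exists_dual_vector'' 𝕜 (x i)
  have hgi : ‖g (x i)‖ = ‖x i‖ := by rw [hgx, RCLike.norm_ofReal, abs_norm]
  refine ⟨g, hg, ?_⟩
  rw [← hgi]
  exact single_le_sum (f := fun k => ‖g (x k)‖ ^ p)
    (fun _ _ => Real.rpow_nonneg (norm_nonneg _) p) (mem_univ i)

namespace WeakLpNormLE

variable {p : ℝ} {x : ι → F} {M : ℝ}

theorem mono_exponent (h : WeakLpNormLE 𝕜 p x M) (hM : 0 ≤ M) (hp : 0 < p) {r : ℝ}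
    (hpr : p ≤ r) : WeakLpNormLE 𝕜 r x M := fun φ hφ =>
  sum_rpow_le_rpow_of_sum_rpow_le (fun _ _ => norm_nonneg _) hM hp hpr (h φ hφ)

theorem smul (h : WeakLpNormLE 𝕜 p x M) (hM : 0 ≤ M) (c : 𝕜) :
    WeakLpNormLE 𝕜 p (fun k => c • x k) (‖c‖ * M) := fun φ hφ => by
  simp_rw [map_smul, smul_eq_mul, norm_mul,
    Real.mul_rpow (norm_nonneg c) (norm_nonneg _), Real.mul_rpow (norm_nonneg c) hM, ← mul_sum]
  exact mul_le_mul_of_nonneg_left (h φ hφ) (Real.rpow_nonneg (norm_nonneg c) p)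

theorem norm_le (h : WeakLpNormLE 𝕜 p x M) (hM : 0 ≤ M) (hp : 0 < p) (k : ι) : ‖x k‖ ≤ M := by
  obtain ⟨g, hg, hgk⟩ := exists_norm_le_one_rpow_norm_le_sum 𝕜 x k p
  exact (Real.rpow_le_rpow_iff (norm_nonneg _) hM hp).1 (hgk.trans (h g hg))

theorem sSup_eq_norm {i₀ : ι} (h : WeakLpNormLE 𝕜 p x ‖x i₀‖) (hp : 0 < p) :
    sSup {s : ℝ | ∃ φ : F →L[𝕜] 𝕜, ‖φ‖ ≤ 1 ∧ s = (∑ k, ‖φ (x k)‖ ^ p) ^ (1 / p)} = ‖x i₀‖ := by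
  have hsum_nonneg : ∀ φ : F →L[𝕜] 𝕜, 0 ≤ ∑ k, ‖φ (x k)‖ ^ p := fun φ =>
    sum_nonneg fun _ _ => Real.rpow_nonneg (norm_nonneg _) p
  have upper : ∀ φ : F →L[𝕜] 𝕜, ‖φ‖ ≤ 1 → (∑ k, ‖φ (x k)‖ ^ p) ^ (1 / p) ≤ ‖x i₀‖ :=
    fun φ hφ => by
      rw [one_div, Real.rpow_inv_le_iff_of_pos (hsum_nonneg φ) (norm_nonneg _) hp]
      exact h φ hφ
  obtain ⟨g, hg, hgx⟩ := exists_norm_le_one_rpow_norm_le_sum 𝕜 x i₀ p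
  have lower : ‖x i₀‖ ≤ (∑ k, ‖g (x k)‖ ^ p) ^ (1 / p) := by
    rwa [one_div, Real.le_rpow_inv_iff_of_pos (norm_nonneg _) (hsum_nonneg g) hp]
  refine IsGreatest.csSup_eq ⟨⟨g, hg, (le_antisymm (upper g hg) lower).symm⟩, ?_⟩
  rintro _ ⟨φ, hφ, rfl⟩
  exact upper φ hφ

theorem exists_one_le_norm {y : ι → F} {i₀ : ι} (h : WeakLpNormLE 𝕜 p y ‖y i₀‖)
    (hy : ∀ k, y k ≠ 0) : ∃ x : ι → F, (∀ k, 1 ≤ ‖x k‖) ∧ WeakLpNormLE 𝕜 p x ‖x i₀‖ := by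
  obtain ⟨k₁, -, hk₁⟩ := exists_min_image univ (fun k => ‖y k‖) ⟨i₀, mem_univ _⟩
  set c : 𝕜 := ((‖y k₁‖⁻¹ : ℝ) : 𝕜)
  have hc : ‖c‖ = ‖y k₁‖⁻¹ := by simp [c]
  refine ⟨fun k => c • y k, fun k => ?_, ?_⟩
  · rw [norm_smul, hc, le_inv_mul_iff₀ (norm_pos_iff.2 (hy k₁)), mul_one]
    exact hk₁ k (mem_univ k)
  · simpa only [norm_smul] using h.smul (norm_nonneg _) c

end WeakLpNormLE

theorem OrthonormalBasis.weakLpNormLE_two_comp {E : Type*} [NormedAddCommGroup E]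
    [InnerProductSpace 𝕜 E] [CompleteSpace E] (b : OrthonormalBasis ι 𝕜 E) (T : E →L[𝕜] F) :
    WeakLpNormLE 𝕜 2 (fun i => T (b i)) ‖T‖ := fun φ hφ => by
  simp_rw [Real.rpow_two]
  calc ∑ i, ‖φ (T (b i))‖ ^ 2 = ‖φ.comp T‖ ^ 2 := b.sum_sq_norm_apply (φ.comp T)
    _ ≤ ‖T‖ ^ 2 := by
        gcongr
        exact (φ.opNorm_comp_le T).trans (mul_le_of_le_one_left (norm_nonneg T) hφ)

end WeakNorm

theorem exists_ne_zero_weakLpNormLE_two {𝕜 F ι : Type*} [RCLike 𝕜] [NormedAddCommGroup F]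
    [NormedSpace 𝕜 F] [FiniteDimensional 𝕜 F] [Fintype ι]
    (hcard : Fintype.card ι = Module.finrank 𝕜 F) (i₀ : ι) :
    ∃ y : ι → F, (∀ k, y k ≠ 0) ∧ WeakLpNormLE 𝕜 2 y ‖y i₀‖ := by
  have : Nonempty ι := ⟨i₀⟩
  obtain ⟨T⟩ : Nonempty (EuclideanSpace 𝕜 ι ≃L[𝕜] F) :=
    FiniteDimensional.nonempty_continuousLinearEquiv_of_finrank_eq (by simp [hcard])
  obtain ⟨a, ha, hTa⟩ :=
    (T : EuclideanSpace 𝕜 ι →L[𝕜] F).exists_norm_eq_one_norm_apply_eq_opNorm_s2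
  have ha_on : Orthonormal 𝕜 (({i₀} : Set ι).domRestrict fun _ => a) :=
    orthonormal_subsingleton_iff.2 fun _ => ha
  obtain ⟨v, hv⟩ := ha_on.exists_orthonormalBasis_extension_of_card_eq (by simp)
  refine ⟨fun k => T (v k), fun k => ?_, ?_⟩
  · exact T.map_ne_zero_iff.2 (v.orthonormal.ne_zero k)
  · have hvT := v.weakLpNormLE_two_comp (T : EuclideanSpace 𝕜 ι →L[𝕜] F)
    rwa [← hTa, ← hv i₀ rfl] at hvT

/-- Consequence of Lemma 1 without reference to `T`. If `F` is an
`m`-dimensional normed space over `𝕂 = ℝ` or `ℂ` (`m ≥ 1`), then there exist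
`x₁, …, x_m` in `F` with `1 ≤ ‖x_k‖ ≤ ‖x₁‖` for all `k`, such that for every real
`r ≥ 2`, `sup { (Σ_k |φ(x_k)|^r)^(1/r) : φ ∈ B_{F′} } = ‖x₁‖`. -/
theorem stmt_2 {𝕂 : Type*} [RCLike 𝕂] {F : Type*} [NormedAddCommGroup F]
    [NormedSpace 𝕂 F] {m : ℕ} (hm : 0 < m) (hdim : Module.finrank 𝕂 F = m) :
    ∃ x : Fin m → F,
      (∀ k, 1 ≤ ‖x k‖) ∧ (∀ k, ‖x k‖ ≤ ‖x ⟨0, hm⟩‖) ∧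
      (∀ r : ℝ, 2 ≤ r →
        sSup {s : ℝ | ∃ φ : F →L[𝕂] 𝕂, ‖φ‖ ≤ 1 ∧
          s = (∑ k, ‖φ (x k)‖ ^ r) ^ (1 / r)} = ‖x ⟨0, hm⟩‖) := by
  have : FiniteDimensional 𝕂 F := .of_finrank_pos (hdim ▸ hm)
  obtain ⟨y, hy0, hy⟩ := exists_ne_zero_weakLpNormLE_two
    ((Fintype.card_fin m).trans hdim.symm) (⟨0, hm⟩ : Fin m)
  obtain ⟨x, hx1, hx⟩ := hy.exists_one_le_norm hy0
  exact ⟨x, hx1, hx.norm_le (norm_nonneg _) two_pos, fun r hr =>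
    (hx.mono_exponent (norm_nonneg _) two_pos hr).sSup_eq_norm (by linarith)⟩
end

section
/- Let 𝕂 be ℝ or ℂ, let E be a normed space over 𝕂 of dimension at least 2, and let n ≥ 2 be an integer. Then there exist vectors x₁, x₂ in E with 1 ≤ ‖x₂‖ ≤ ‖x₁‖ such that sup{ |φ(x₁)|^n + |φ(x₂)|^n : φ ∈ E′, ‖φ‖ ≤ 1 } = ‖x₁‖^n. -/
/-!
Pick a pair `x₁, x₂` for which the operator `T : (α, β) ↦ α • x₁ + β • x₂` on the Euclidean
plane `𝕂²` attains its norm at `(1, 0)`: maximize `‖α • u + β • v‖` over the unit sphere of `𝕂²`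
for independent `u, v`, and precompose with a unitary of `𝕂²` sending `(1, 0)` to a maximizer.
For a functional `φ` of norm at most `1`, `(‖φ x₁‖² + ‖φ x₂‖²)^(1/2) = ‖φ ∘ T‖ ≤ ‖T‖ = ‖x₁‖`, and
`ℓ² ⊆ ℓⁿ` contractively upgrades this to the exponent `n`; a Hahn–Banach functional norming `x₁`
attains the bound. Rescaling makes `‖x₂‖ = 1`.
-/

open Metric ComplexConjugate

section

variable {𝕂 : Type*} [RCLike 𝕂]

theorem norm_sq_add_norm_sq_rotation (α β a b : 𝕂) :
    ‖α * a - β * conj b‖ ^ 2 + ‖α * b + β * conj a‖ ^ 2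
      = (‖α‖ ^ 2 + ‖β‖ ^ 2) * (‖a‖ ^ 2 + ‖b‖ ^ 2) := by
  have h : ∀ z : 𝕂, ((‖z‖ ^ 2 : ℝ) : 𝕂) = z * conj z := fun z => by
    rw [RCLike.ofReal_pow, RCLike.mul_conj]
  apply RCLike.ofReal_injective (K := 𝕂)
  push_cast
  simp only [← RCLike.ofReal_pow, h, map_sub, map_add, map_mul, RCLike.conj_conj]
  ring

theorem exists_norm_sq_add_norm_sq_eq_one_mul_add_mul_eq_sqrt (z w : 𝕂) :
    ∃ α β : 𝕂, ‖α‖ ^ 2 + ‖β‖ ^ 2 = 1 ∧ α * z + β * w = √(‖z‖ ^ 2 + ‖w‖ ^ 2) := by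
  have hr : √(‖z‖ ^ 2 + ‖w‖ ^ 2) ^ 2 = ‖z‖ ^ 2 + ‖w‖ ^ 2 := Real.sq_sqrt (by positivity)
  have hr0 := Real.sqrt_nonneg (‖z‖ ^ 2 + ‖w‖ ^ 2)
  generalize √(‖z‖ ^ 2 + ‖w‖ ^ 2) = r at hr hr0 ⊢
  rcases hr0.eq_or_lt with rfl | hr0
  · have hz : z = 0 := by
      have : ‖z‖ ^ 2 = 0 := by nlinarith [sq_nonneg ‖w‖]
      simpa using this
    exact ⟨1, 0, by simp, by simp [hz]⟩
  · refine ⟨conj z / r, conj w / r, ?_, ?_⟩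
    · rw [norm_div, norm_div, RCLike.norm_conj, RCLike.norm_conj, RCLike.norm_ofReal,
        abs_of_pos hr0, div_pow, div_pow, ← add_div, ← hr, div_self (by positivity)]
    · have hr' : (r : 𝕂) ≠ 0 := RCLike.ofReal_ne_zero.2 hr0.ne'
      field_simp
      rw [RCLike.conj_mul, RCLike.conj_mul, ← RCLike.ofReal_pow, ← RCLike.ofReal_pow,
        ← RCLike.ofReal_add, ← hr]
      push_cast; ring

theorem pow_add_pow_le_pow_of_sq_add_sq_le {a b t : ℝ} {n : ℕ} (ha : 0 ≤ a) (hb : 0 ≤ b)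
    (ht : 0 ≤ t) (h : a ^ 2 + b ^ 2 ≤ t ^ 2) (hn : 2 ≤ n) : a ^ n + b ^ n ≤ t ^ n := by
  obtain ⟨k, rfl⟩ := Nat.exists_eq_add_of_le hn
  have hat : a ≤ t := by nlinarith [sq_nonneg b]
  have hbt : b ≤ t := by nlinarith [sq_nonneg a]
  calc a ^ (2 + k) + b ^ (2 + k) = a ^ 2 * a ^ k + b ^ 2 * b ^ k := by ring
    _ ≤ a ^ 2 * t ^ k + b ^ 2 * t ^ k := by gcongr
    _ = (a ^ 2 + b ^ 2) * t ^ k := by ring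
    _ ≤ t ^ 2 * t ^ k := by gcongr
    _ = t ^ (2 + k) := by ring

variable {E : Type*} [NormedAddCommGroup E] [NormedSpace 𝕂 E]

variable (𝕂) in
/-- The operator `(α, β) ↦ α • x₁ + β • x₂` from the Euclidean plane `𝕂²` to `E` attains its
norm at the first basis vector. -/
def IsL2Extremal (x₁ x₂ : E) : Prop :=
  ∀ α β : 𝕂, ‖α‖ ^ 2 + ‖β‖ ^ 2 = 1 → ‖α • x₁ + β • x₂‖ ≤ ‖x₁‖

namespace IsL2Extremal

variable {x₁ x₂ : E}

theorem norm_le (h : IsL2Extremal 𝕂 x₁ x₂) : ‖x₂‖ ≤ ‖x₁‖ := by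
  simpa using h 0 1 (by simp)

theorem smul (h : IsL2Extremal 𝕂 x₁ x₂) (c : 𝕂) : IsL2Extremal 𝕂 (c • x₁) (c • x₂) := by
  intro α β hαβ
  rw [smul_comm α, smul_comm β, ← smul_add, norm_smul, norm_smul]
  exact mul_le_mul_of_nonneg_left (h α β hαβ) (norm_nonneg c)

theorem norm_sq_add_norm_sq_apply_le (h : IsL2Extremal 𝕂 x₁ x₂) (φ : E →L[𝕂] 𝕂) :
    ‖φ x₁‖ ^ 2 + ‖φ x₂‖ ^ 2 ≤ (‖φ‖ * ‖x₁‖) ^ 2 := by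
  obtain ⟨α, β, hαβ, hval⟩ :=
    exists_norm_sq_add_norm_sq_eq_one_mul_add_mul_eq_sqrt (φ x₁) (φ x₂)
  have hsqrt : √(‖φ x₁‖ ^ 2 + ‖φ x₂‖ ^ 2) ≤ ‖φ‖ * ‖x₁‖ :=
    calc √(‖φ x₁‖ ^ 2 + ‖φ x₂‖ ^ 2) = ‖φ (α • x₁ + β • x₂)‖ := by
          rw [map_add, map_smul, map_smul, smul_eq_mul, smul_eq_mul, hval,
            RCLike.norm_ofReal, abs_of_nonneg (Real.sqrt_nonneg _)]
      _ ≤ ‖φ‖ * ‖α • x₁ + β • x₂‖ := φ.le_opNorm _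
      _ ≤ ‖φ‖ * ‖x₁‖ := mul_le_mul_of_nonneg_left (h α β hαβ) (norm_nonneg φ)
  exact (Real.sqrt_le_left (by positivity)).1 hsqrt

theorem sSup_norm_pow_add_norm_pow (h : IsL2Extremal 𝕂 x₁ x₂) {n : ℕ} (hn : 2 ≤ n) :
    sSup {s : ℝ | ∃ φ : E →L[𝕂] 𝕂, ‖φ‖ ≤ 1 ∧ s = ‖φ x₁‖ ^ n + ‖φ x₂‖ ^ n} = ‖x₁‖ ^ n := by
  have hbound : ∀ φ : E →L[𝕂] 𝕂, ‖φ‖ ≤ 1 → ‖φ x₁‖ ^ n + ‖φ x₂‖ ^ n ≤ ‖x₁‖ ^ n := by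
    intro φ hφ
    refine pow_add_pow_le_pow_of_sq_add_sq_le (norm_nonneg _) (norm_nonneg _) (norm_nonneg _)
      ((h.norm_sq_add_norm_sq_apply_le φ).trans ?_) hn
    gcongr
    exact mul_le_of_le_one_left (norm_nonneg _) hφ
  obtain ⟨g, hg, hgx⟩ := exists_dual_vector'' 𝕂 x₁
  refine IsGreatest.csSup_eq ⟨⟨g, hg, (hbound g hg).antisymm' ?_⟩, ?_⟩
  · rw [hgx, RCLike.norm_ofReal, abs_norm]
    exact le_add_of_nonneg_right (by positivity)
  · rintro s ⟨φ, hφ, rfl⟩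
    exact hbound φ hφ

end IsL2Extremal

theorem isL2Extremal_of_isMaxOn {u v : E} {p : 𝕂 × 𝕂}
    (hmax : IsMaxOn (fun q : 𝕂 × 𝕂 => ‖q.1 • u + q.2 • v‖) {q | ‖q.1‖ ^ 2 + ‖q.2‖ ^ 2 = 1} p)
    (hp : ‖p.1‖ ^ 2 + ‖p.2‖ ^ 2 = 1) :
    IsL2Extremal 𝕂 (p.1 • u + p.2 • v) ((-conj p.2) • u + conj p.1 • v) := by
  intro α β hαβ
  have hrot : α • (p.1 • u + p.2 • v) + β • ((-conj p.2) • u + conj p.1 • v)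
      = (α * p.1 - β * conj p.2) • u + (α * p.2 + β * conj p.1) • v := by
    module
  rw [hrot]
  refine hmax (a := (α * p.1 - β * conj p.2, α * p.2 + β * conj p.1)) ?_
  change _ = _
  rw [norm_sq_add_norm_sq_rotation, hαβ, hp, one_mul]

theorem isCompact_unitSphere_prod :
    IsCompact {q : 𝕂 × 𝕂 | ‖q.1‖ ^ 2 + ‖q.2‖ ^ 2 = 1} := by
  refine (isCompact_closedBall (0 : 𝕂 × 𝕂) 1).of_isClosed_subset
    (isClosed_eq (by fun_prop) continuous_const) fun q hq => ?_
  have hq : ‖q.1‖ ^ 2 + ‖q.2‖ ^ 2 = 1 := hq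
  rw [mem_closedBall, dist_zero_right, Prod.norm_def]
  apply max_le <;> nlinarith [norm_nonneg q.1, norm_nonneg q.2]

theorem exists_isL2Extremal_of_linearIndependent {u v : E} (huv : LinearIndependent 𝕂 ![u, v]) :
    ∃ x₁ x₂ : E, x₂ ≠ 0 ∧ IsL2Extremal 𝕂 x₁ x₂ := by
  obtain ⟨p, hp, hmax⟩ := isCompact_unitSphere_prod.exists_isMaxOn ⟨(1, 0), by simp⟩
    (by fun_prop : Continuous fun q : 𝕂 × 𝕂 => ‖q.1 • u + q.2 • v‖).continuousOn
  refine ⟨_, _, fun h0 => ?_, isL2Extremal_of_isMaxOn hmax hp⟩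
  obtain ⟨h₁, h₂⟩ := LinearIndependent.pair_iff.1 huv _ _ h0
  have hp : ‖p.1‖ ^ 2 + ‖p.2‖ ^ 2 = 1 := hp
  simp_all

theorem exists_isL2Extremal_norm_eq_one (h : 1 < Module.rank 𝕂 E) :
    ∃ x₁ x₂ : E, ‖x₂‖ = 1 ∧ IsL2Extremal 𝕂 x₁ x₂ := by
  have : Nontrivial E := rank_pos_iff_nontrivial.1 (zero_lt_one.trans h)
  obtain ⟨u, hu⟩ := exists_ne (0 : E)
  obtain ⟨v, huv⟩ := exists_linearIndependent_pair_of_one_lt_rank h hu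
  obtain ⟨x₁, x₂, hx₂, hx⟩ := exists_isL2Extremal_of_linearIndependent huv
  exact ⟨_, _, norm_smul_inv_norm hx₂, hx.smul _⟩

end

/-- Key step in the proof of Theorem 2. If `E` is a normed space over
`𝕂 = ℝ` or `ℂ` of dimension at least `2` and `n ≥ 2`, then there exist `x₁, x₂ ∈ E`
with `1 ≤ ‖x₂‖ ≤ ‖x₁‖` such that
`sup { |φ(x₁)|^n + |φ(x₂)|^n : φ ∈ B_{E′} } = ‖x₁‖^n`. -/
theorem stmt_3 {𝕂 : Type*} [RCLike 𝕂] {E : Type*} [NormedAddCommGroup E]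
    [NormedSpace 𝕂 E] (hdim : 2 ≤ Module.rank 𝕂 E) {n : ℕ} (hn : 2 ≤ n) :
    ∃ x₁ x₂ : E, 1 ≤ ‖x₂‖ ∧ ‖x₂‖ ≤ ‖x₁‖ ∧
      sSup {s : ℝ | ∃ φ : E →L[𝕂] 𝕂, ‖φ‖ ≤ 1 ∧
        s = ‖φ x₁‖ ^ n + ‖φ x₂‖ ^ n} = ‖x₁‖ ^ n := by
  obtain ⟨x₁, x₂, hx₂, hx⟩ :=
    exists_isL2Extremal_norm_eq_one ((by norm_num : (1 : Cardinal) < 2).trans_le hdim)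
  exact ⟨x₁, x₂, hx₂.ge, hx.norm_le, hx.sSup_norm_pow_add_norm_pow hn⟩
end

section
/- Let E be a complex normed space of dimension at least 2 and let n ≥ 2 be an integer. Then there exist vectors x₁, x₂ in E with x₂ ≠ 0 and ‖x₁‖ ≥ 1 such that sup{ |φ(x₁)|^n : φ ∈ E′, ‖φ‖ ≤ 1 } = ‖x₁‖^n, and for every ζ ∈ ℂ with |ζ| ≤ 1, sup{ |φ(x₁)^n + ζ · φ(x₂)^n| : φ ∈ E′, ‖φ‖ ≤ 1 } ≤ ‖x₁‖^n. (In the language of the paper, the norm-one tensor u = x₁⊗⋯⊗x₁ / ‖x₁‖^n fails to be a complex extreme point of the unit ball of the n-fold symmetric injective tensor product of E; hence that space, and the space 𝒫(ⁿE) of continuous n-homogeneous polynomials, are not complex strictly convex.) -/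
/-!
The unit ball of a normed space of dimension at least `2` contains a Euclidean disc through a
point of norm one: for an injective `T` from `ℓ²₂`, a point `u₀` of the Euclidean unit ball where
`‖T‖` is attained and a unit vector `u₁ ⊥ u₀`, the vectors `x₁ = T u₀ / ‖T‖`, `x₂ = T u₁ / ‖T‖`
satisfy `‖α x₁ + β x₂‖² ≤ |α|² + |β|²` with `‖x₁‖ = 1`. Dually `|φ x₁|² + |φ x₂|² ≤ 1` on the dual
unit ball, so for `n ≥ 2` and `|ζ| ≤ 1`,
`|φ(x₁)ⁿ + ζ φ(x₂)ⁿ| ≤ |φ x₁|ⁿ + |φ x₂|ⁿ ≤ |φ x₁|² + |φ x₂|² ≤ 1 = ‖x₁‖ⁿ`.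
-/

open scoped ComplexConjugate InnerProductSpace

theorem ContinuousLinearMap.exists_norm_le_one_norm_apply_eq_opNorm {𝕜 E F : Type*}
    [DenselyNormedField 𝕜] [NormedAddCommGroup E] [NormedSpace 𝕜 E] [ProperSpace E]
    [SeminormedAddCommGroup F] [NormedSpace 𝕜 F] (T : E →L[𝕜] F) :
    ∃ u, ‖u‖ ≤ 1 ∧ ‖T u‖ = ‖T‖ := by
  obtain ⟨u, hu, hmax⟩ := (isCompact_closedBall (0 : E) 1).exists_sSup_image_eq
    (Metric.nonempty_closedBall.2 zero_le_one) (continuous_norm.comp T.continuous).continuousOn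
  exact ⟨u, mem_closedBall_zero_iff.1 hu, hmax.symm.trans T.sSup_unitClosedBall_eq_norm⟩

section InnerProductSpace

variable {𝕜 H : Type*} [RCLike 𝕜] [NormedAddCommGroup H] [InnerProductSpace 𝕜 H]

theorem exists_norm_eq_one_inner_eq_zero [FiniteDimensional 𝕜 H]
    (hH : 2 ≤ Module.finrank 𝕜 H) (u : H) : ∃ v : H, ‖v‖ = 1 ∧ ⟪u, v⟫_𝕜 = 0 := by
  let K := 𝕜 ∙ u
  have hK : Module.finrank 𝕜 K ≤ 1 := by
    simpa using finrank_span_le_card (R := 𝕜) ({u} : Set H)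
  have : Nontrivial Kᗮ := Module.nontrivial_of_finrank_pos (R := 𝕜) (by
    have := K.finrank_add_finrank_orthogonal; omega)
  obtain ⟨w, hw⟩ := exists_ne (0 : Kᗮ)
  have hw₀ : (w : H) ≠ 0 := by exact_mod_cast hw
  refine ⟨(‖(w : H)‖⁻¹ : 𝕜) • (w : H), norm_smul_inv_norm hw₀, ?_⟩
  rw [inner_smul_right, Submodule.mem_orthogonal_singleton_iff_inner_right.mp w.2, mul_zero]

theorem norm_smul_add_smul_sq_le {u₀ u₁ : H} (h₀ : ‖u₀‖ ≤ 1) (h₁ : ‖u₁‖ ≤ 1)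
    (horth : ⟪u₀, u₁⟫_𝕜 = 0) (α β : 𝕜) :
    ‖α • u₀ + β • u₁‖ ^ 2 ≤ ‖α‖ ^ 2 + ‖β‖ ^ 2 := by
  rw [@norm_add_sq 𝕜, inner_smul_left, inner_smul_right, horth, mul_zero, mul_zero, map_zero,
    mul_zero, add_zero, norm_smul, norm_smul, mul_pow, mul_pow]
  gcongr
  · exact mul_le_of_le_one_right (by positivity) (pow_le_one₀ (norm_nonneg _) h₀)
  · exact mul_le_of_le_one_right (by positivity) (pow_le_one₀ (norm_nonneg _) h₁)

end InnerProductSpace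

section NormedSpace

variable {𝕜 E : Type*} [RCLike 𝕜] [NormedAddCommGroup E] [NormedSpace 𝕜 E]

theorem exists_norm_eq_one_forall_norm_smul_add_smul_sq_le {H : Type*} [NormedAddCommGroup H]
    [InnerProductSpace 𝕜 H] [FiniteDimensional 𝕜 H] (hH : 2 ≤ Module.finrank 𝕜 H)
    {T : H →L[𝕜] E} (hT : Function.Injective T) :
    ∃ x₁ x₂ : E, ‖x₁‖ = 1 ∧ x₂ ≠ 0 ∧
      ∀ α β : 𝕜, ‖α • x₁ + β • x₂‖ ^ 2 ≤ ‖α‖ ^ 2 + ‖β‖ ^ 2 := by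
  have := FiniteDimensional.proper_rclike 𝕜 H
  obtain ⟨u₀, hu₀, hTu₀⟩ := T.exists_norm_le_one_norm_apply_eq_opNorm
  obtain ⟨u₁, hu₁, horth⟩ := exists_norm_eq_one_inner_eq_zero hH u₀
  have : Nontrivial H := Module.nontrivial_of_finrank_pos (R := 𝕜) (by omega)
  have hT₀ : 0 < ‖T‖ := by
    obtain ⟨v, hv⟩ := exists_ne (0 : H)
    exact norm_pos_iff.2 fun h ↦ hv (hT (by rw [h, map_zero, zero_apply]))
  refine ⟨(‖T‖⁻¹ : 𝕜) • T u₀, (‖T‖⁻¹ : 𝕜) • T u₁, ?_, ?_, fun α β ↦ ?_⟩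
  · rw [norm_smul, hTu₀, norm_inv, RCLike.norm_ofReal, abs_of_pos hT₀, inv_mul_cancel₀ hT₀.ne']
  · refine smul_ne_zero (by simpa using hT₀.ne') fun h ↦ ?_
    rw [← map_zero T] at h
    simp [hT h] at hu₁
  · have key : ‖α • (‖T‖⁻¹ : 𝕜) • T u₀ + β • (‖T‖⁻¹ : 𝕜) • T u₁‖ ≤ ‖α • u₀ + β • u₁‖ := by
      rw [smul_comm α, smul_comm β, ← smul_add, ← map_smul, ← map_smul, ← map_add, norm_smul,
        norm_inv, RCLike.norm_ofReal, abs_of_pos hT₀, inv_mul_le_iff₀ hT₀]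
      exact T.le_opNorm _
    exact (pow_le_pow_left₀ (norm_nonneg _) key 2).trans
      (norm_smul_add_smul_sq_le hu₀ hu₁.le horth α β)

theorem exists_continuousLinearMap_euclideanSpace_injective (hE : 2 ≤ Module.rank 𝕜 E) :
    ∃ T : EuclideanSpace 𝕜 (Fin 2) →L[𝕜] E, Function.Injective T := by
  obtain ⟨f, hf⟩ := exists_linearIndependent_of_le_rank (R := 𝕜) (M := E) (n := 2)
    (by exact_mod_cast hE)
  refine ⟨(Fintype.linearCombination 𝕜 f ∘ₗ
    (EuclideanSpace.equiv (Fin 2) 𝕜).toLinearMap).toContinuousLinearMap, ?_⟩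
  exact (linearIndependent_iff_injective_fintypeLinearCombination.1 hf).comp
    (EuclideanSpace.equiv (Fin 2) 𝕜).injective

theorem norm_sq_apply_add_norm_sq_apply_le {x₁ x₂ : E}
    (h : ∀ α β : 𝕜, ‖α • x₁ + β • x₂‖ ^ 2 ≤ ‖α‖ ^ 2 + ‖β‖ ^ 2) (φ : E →L[𝕜] 𝕜) :
    ‖φ x₁‖ ^ 2 + ‖φ x₂‖ ^ 2 ≤ ‖φ‖ ^ 2 := by
  set s := ‖φ x₁‖ ^ 2 + ‖φ x₂‖ ^ 2
  set v := conj (φ x₁) • x₁ + conj (φ x₂) • x₂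
  have hφv : φ v = s := by
    simp only [v, s, map_add, map_smul, smul_eq_mul, RCLike.conj_mul]
    push_cast; rfl
  have hv : ‖v‖ ^ 2 ≤ s := by simpa only [RCLike.norm_conj] using h (conj (φ x₁)) (conj (φ x₂))
  have hs : s * s ≤ ‖φ‖ ^ 2 * s := calc
    s * s = ‖φ v‖ ^ 2 := by rw [hφv, RCLike.norm_ofReal, sq_abs, sq]
    _ ≤ (‖φ‖ * ‖v‖) ^ 2 := pow_le_pow_left₀ (norm_nonneg _) (φ.le_opNorm v) 2
    _ ≤ ‖φ‖ ^ 2 * s := by rw [mul_pow]; gcongr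
  rcases (show 0 ≤ s by positivity).eq_or_lt with hs₀ | hs₀
  · rw [← hs₀]; positivity
  · exact le_of_mul_le_mul_right hs hs₀

theorem sSup_norm_apply_pow_eq (x : E) (n : ℕ) :
    sSup {s : ℝ | ∃ φ : E →L[𝕜] 𝕜, ‖φ‖ ≤ 1 ∧ s = ‖φ x‖ ^ n} = ‖x‖ ^ n := by
  refine IsGreatest.csSup_eq ⟨?_, ?_⟩
  · obtain ⟨g, hg, hgx⟩ := exists_dual_vector'' 𝕜 x
    exact ⟨g, hg, by rw [hgx, RCLike.norm_ofReal, abs_norm]⟩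
  · rintro _ ⟨φ, hφ, rfl⟩
    exact pow_le_pow_left₀ (norm_nonneg _) (φ.le_of_opNorm_le hφ x |>.trans_eq (one_mul _)) n

end NormedSpace

theorem norm_pow_add_mul_pow_le_one {K : Type*} [NormedField K] {a b ζ : K} {n : ℕ}
    (hab : ‖a‖ ^ 2 + ‖b‖ ^ 2 ≤ 1) (hζ : ‖ζ‖ ≤ 1) (hn : 2 ≤ n) : ‖a ^ n + ζ * b ^ n‖ ≤ 1 := by
  have ha : ‖a‖ ≤ 1 := by nlinarith [norm_nonneg a, norm_nonneg b]
  have hb : ‖b‖ ≤ 1 := by nlinarith [norm_nonneg a, norm_nonneg b]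
  calc ‖a ^ n + ζ * b ^ n‖ ≤ ‖a‖ ^ n + ‖ζ‖ * ‖b‖ ^ n := by
        simpa only [norm_mul, norm_pow] using norm_add_le (a ^ n) (ζ * b ^ n)
    _ ≤ ‖a‖ ^ 2 + 1 * ‖b‖ ^ 2 :=
        add_le_add (pow_le_pow_of_le_one (norm_nonneg _) ha hn)
          (mul_le_mul hζ (pow_le_pow_of_le_one (norm_nonneg _) hb hn) (by positivity) zero_le_one)
    _ ≤ 1 := by rwa [one_mul]

/-- Theorem 2, complex case. If `E` is a complex normed space of
dimension at least `2` and `n ≥ 2`, then there exist `x₁, x₂ ∈ E` with `x₂ ≠ 0`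
and `‖x₁‖ ≥ 1` such that `sup { |φ(x₁)|^n : φ ∈ B_{E′} } = ‖x₁‖^n` and for every
`ζ ∈ ℂ` with `|ζ| ≤ 1`, `sup { |φ(x₁)^n + ζ·φ(x₂)^n| : φ ∈ B_{E′} } ≤ ‖x₁‖^n`.
(That is, `x₁⊗⋯⊗x₁ / ‖x₁‖^n` is a norm-one tensor that is not a complex extreme
point of the unit ball of the `n`-fold symmetric injective tensor product, so that
space and `𝒫(ⁿE)` are not complex strictly convex.) -/
theorem stmt_4 {E : Type*} [NormedAddCommGroup E] [NormedSpace ℂ E]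
    (hdim : 2 ≤ Module.rank ℂ E) {n : ℕ} (hn : 2 ≤ n) :
    ∃ x₁ x₂ : E, x₂ ≠ 0 ∧ 1 ≤ ‖x₁‖ ∧
      sSup {s : ℝ | ∃ φ : E →L[ℂ] ℂ, ‖φ‖ ≤ 1 ∧ s = ‖φ x₁‖ ^ n} = ‖x₁‖ ^ n ∧
      ∀ ζ : ℂ, ‖ζ‖ ≤ 1 →
        sSup {s : ℝ | ∃ φ : E →L[ℂ] ℂ, ‖φ‖ ≤ 1 ∧
          s = ‖(φ x₁) ^ n + ζ * (φ x₂) ^ n‖} ≤ ‖x₁‖ ^ n := by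
  obtain ⟨T, hT⟩ := exists_continuousLinearMap_euclideanSpace_injective hdim
  obtain ⟨x₁, x₂, hx₁, hx₂, hdisc⟩ := exists_norm_eq_one_forall_norm_smul_add_smul_sq_le
    (finrank_euclideanSpace_fin (𝕜 := ℂ)).ge hT
  refine ⟨x₁, x₂, hx₂, hx₁.ge, sSup_norm_apply_pow_eq x₁ n, fun ζ hζ ↦ ?_⟩
  rw [hx₁, one_pow]
  refine Real.sSup_le ?_ zero_le_one
  rintro _ ⟨φ, hφ, rfl⟩
  have hφ₁ : ‖φ x₁‖ ^ 2 + ‖φ x₂‖ ^ 2 ≤ 1 :=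
    (norm_sq_apply_add_norm_sq_apply_le hdisc φ).trans (pow_le_one₀ (norm_nonneg _) hφ)
  exact norm_pow_add_mul_pow_le_one hφ₁ hζ hn
end

section
/- Let E be a real normed space of dimension at least 2 and let n ≥ 2 be an integer. Then there exist vectors x₁, x₂ in E with x₂ ≠ 0 and ‖x₁‖ ≥ 1 such that sup{ |φ(x₁)|^n : φ ∈ E′, ‖φ‖ ≤ 1 } = ‖x₁‖^n, and for every real t with |t| ≤ 1, sup{ |φ(x₁)^n + t · φ(x₂)^n| : φ ∈ E′, ‖φ‖ ≤ 1 } ≤ ‖x₁‖^n. (In the language of the paper, the norm-one tensor u = x₁⊗⋯⊗x₁ / ‖x₁‖^n fails to be an extreme point of the unit ball of the n-fold symmetric injective tensor product of E; hence that space, and the space 𝒫(ⁿE) of continuous n-homogeneous polynomials, are not strictly convex.) -/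
/-!
View `ℂ` as the Euclidean plane and choose an injective `T : ℂ →L[ℝ] E` with `‖T‖ = 1` attaining
its norm at a unit vector `u`. Put `x₁ = T u` and `x₂ = T (i u)`. For `φ` in the dual unit ball,
`φ ∘ T` has norm at most `1` and `u, i u` are orthonormal, so `φ(x₁)² + φ(x₂)² ≤ 1`; for `n ≥ 2`
this bounds `|φ(x₁)^n + t φ(x₂)^n|` by `1 = ‖x₁‖^n`.
-/

open scoped RealInnerProductSpace

theorem sq_add_sq_le_one_of_orthonormal {H E : Type*} [NormedAddCommGroup H]
    [InnerProductSpace ℝ H] [NormedAddCommGroup E] [NormedSpace ℝ E] {T : H →L[ℝ] E}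
    (hT : ‖T‖ ≤ 1) {u v : H} (hu : ‖u‖ = 1) (hv : ‖v‖ = 1) (huv : ⟪u, v⟫ = 0)
    {φ : E →L[ℝ] ℝ} (hφ : ‖φ‖ ≤ 1) : φ (T u) ^ 2 + φ (T v) ^ 2 ≤ 1 := by
  set a := φ (T u)
  set b := φ (T v)
  -- Testing `φ ∘ T` on `w` gives `a² + b² ≤ ‖w‖ = √(a² + b²)`.
  set w := a • u + b • v
  have hw : ‖w‖ ^ 2 = a ^ 2 + b ^ 2 := by
    rw [norm_add_sq_real, norm_smul, norm_smul, inner_smul_left, inner_smul_right, huv, hu, hv]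
    simp [sq_abs]
  have hφw : φ (T w) = a ^ 2 + b ^ 2 := by
    simp only [w, map_add, map_smul, smul_eq_mul]
    ring
  have hle : φ (T w) ≤ ‖w‖ :=
    calc φ (T w) ≤ ‖(φ.comp T) w‖ := le_abs_self _
      _ ≤ 1 * ‖w‖ := (φ.comp T).le_of_opNorm_le
          ((φ.opNorm_comp_le T).trans (mul_le_one₀ hφ (norm_nonneg _) hT)) w
      _ = ‖w‖ := one_mul _
  nlinarith [norm_nonneg w, sq_nonneg a, sq_nonneg b]

theorem abs_pow_add_mul_pow_le_one {a b t : ℝ} {n : ℕ} (hn : 2 ≤ n)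
    (hab : a ^ 2 + b ^ 2 ≤ 1) (ht : |t| ≤ 1) : |a ^ n + t * b ^ n| ≤ 1 := by
  have pow_le_sq {c : ℝ} (hc : c ^ 2 ≤ 1) : |c| ^ n ≤ c ^ 2 := by
    rw [← sq_abs c] at hc ⊢
    exact pow_le_pow_of_le_one (abs_nonneg c) ((sq_le_one_iff₀ (abs_nonneg c)).1 hc) hn
  calc |a ^ n + t * b ^ n| ≤ |a| ^ n + |t| * |b| ^ n := by
        simpa only [abs_mul, abs_pow] using abs_add_le (a ^ n) (t * b ^ n)
    _ ≤ |a| ^ n + 1 * |b| ^ n := by gcongr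
    _ ≤ a ^ 2 + b ^ 2 := by
        rw [one_mul]
        exact add_le_add (pow_le_sq (by nlinarith [sq_nonneg b]))
          (pow_le_sq (by nlinarith [sq_nonneg a]))
    _ ≤ 1 := hab

theorem ContinuousLinearMap.exists_norm_apply_eq_opNorm {V F : Type*} [NormedAddCommGroup V]
    [NormedSpace ℝ V] [FiniteDimensional ℝ V] [Nontrivial V] [NormedAddCommGroup F]
    [NormedSpace ℝ F] (T : V →L[ℝ] F) : ∃ u : V, ‖u‖ = 1 ∧ ‖T u‖ = ‖T‖ := by
  have hcpt : IsCompact ((fun x => ‖T x‖) '' Metric.sphere (0 : V) 1) :=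
    (isCompact_sphere 0 1).image (by fun_prop)
  obtain ⟨u, hu, hTu⟩ := hcpt.sSup_mem ((NormedSpace.sphere_nonempty.2 zero_le_one).image _)
  exact ⟨u, by simpa using hu, hTu.trans T.sSup_sphere_eq_norm⟩

theorem exists_injective_complex_norm_one_attained {E : Type*} [NormedAddCommGroup E]
    [NormedSpace ℝ E] (hdim : 2 ≤ Module.rank ℝ E) :
    ∃ (T : ℂ →L[ℝ] E) (u : ℂ), Function.Injective T ∧ ‖T‖ ≤ 1 ∧ ‖u‖ = 1 ∧ ‖T u‖ = 1 := by
  obtain ⟨T₀, hT₀⟩ : ∃ T₀ : ℂ →ₗ[ℝ] E, Function.Injective T₀ :=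
    lift_rank_le_iff_exists_linearMap.1 (by simpa [Complex.rank_real_complex] using hdim)
  set T := LinearMap.toContinuousLinearMap T₀
  obtain ⟨u, hu, hTu⟩ := T.exists_norm_apply_eq_opNorm
  have hT_pos : 0 < ‖T‖ := by
    rw [← hTu, norm_pos_iff]
    exact (map_ne_zero_iff T₀ hT₀).2 (norm_ne_zero_iff.1 (by simp [hu]))
  refine ⟨‖T‖⁻¹ • T, u, ?_, ?_, hu, ?_⟩
  · exact (smul_right_injective E (inv_ne_zero hT_pos.ne')).comp hT₀
  · simp [norm_smul, hT_pos.ne']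
  · simp [norm_smul, hTu, hT_pos.ne']

theorem sSup_abs_pow_dual_unitBall {E : Type*} [NormedAddCommGroup E] [NormedSpace ℝ E]
    (x : E) (n : ℕ) :
    sSup {s : ℝ | ∃ φ : E →L[ℝ] ℝ, ‖φ‖ ≤ 1 ∧ s = |φ x| ^ n} = ‖x‖ ^ n := by
  refine IsGreatest.csSup_eq ⟨?_, ?_⟩
  · obtain ⟨g, hg, hgx⟩ := exists_dual_vector'' ℝ x
    exact ⟨g, hg, by simp [hgx]⟩
  · rintro _ ⟨φ, hφ, rfl⟩
    gcongr
    simpa using φ.le_of_opNorm_le hφ x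

/-- Theorem 2, real case. If `E` is a real normed space of dimension
at least `2` and `n ≥ 2`, then there exist `x₁, x₂ ∈ E` with `x₂ ≠ 0` and
`‖x₁‖ ≥ 1` such that `sup { |φ(x₁)|^n : φ ∈ B_{E′} } = ‖x₁‖^n` and for every real
`t` with `|t| ≤ 1`, `sup { |φ(x₁)^n + t·φ(x₂)^n| : φ ∈ B_{E′} } ≤ ‖x₁‖^n`.
(That is, `x₁⊗⋯⊗x₁ / ‖x₁‖^n` is a norm-one tensor that is not an extreme point of
the unit ball of the `n`-fold symmetric injective tensor product, so that space
and `𝒫(ⁿE)` are not strictly convex.) -/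
theorem stmt_5 {E : Type*} [NormedAddCommGroup E] [NormedSpace ℝ E]
    (hdim : 2 ≤ Module.rank ℝ E) {n : ℕ} (hn : 2 ≤ n) :
    ∃ x₁ x₂ : E, x₂ ≠ 0 ∧ 1 ≤ ‖x₁‖ ∧
      sSup {s : ℝ | ∃ φ : E →L[ℝ] ℝ, ‖φ‖ ≤ 1 ∧ s = |φ x₁| ^ n} = ‖x₁‖ ^ n ∧
      ∀ t : ℝ, |t| ≤ 1 →
        sSup {s : ℝ | ∃ φ : E →L[ℝ] ℝ, ‖φ‖ ≤ 1 ∧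
          s = |(φ x₁) ^ n + t * (φ x₂) ^ n|} ≤ ‖x₁‖ ^ n := by
  obtain ⟨T, u, hT_inj, hT, hu, hTu⟩ := exists_injective_complex_norm_one_attained hdim
  have hIu : ‖Complex.I * u‖ = 1 := by simp [hu]
  have hperp : ⟪u, Complex.I * u⟫ = 0 := by
    simp [Complex.inner]
    ring
  refine ⟨T u, T (Complex.I * u), ?_, hTu.ge, sSup_abs_pow_dual_unitBall _ n, fun t ht => ?_⟩
  · exact (map_ne_zero_iff T hT_inj).2 (norm_ne_zero_iff.1 (by rw [hIu]; exact one_ne_zero))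
  · rw [hTu, one_pow]
    refine csSup_le ⟨_, 0, by simp, rfl⟩ ?_
    rintro _ ⟨φ, hφ, rfl⟩
    exact abs_pow_add_mul_pow_le_one hn
      (sq_add_sq_le_one_of_orthonormal hT hu hIu hperp hφ) ht
end
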